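/- Let 0 ≤ q_l ≤ q_r be real numbers and let z ∈ ℂ not lie in the real interval [−q_r, q_r] (i.e. it is not the case that Im z = 0 and |Re z| ≤ q_r). Then the reflection coefficient satisfies |r(z)| < 1. -/

import Mathlib

open Complex

/-- `β_q(z) = ((z − q)/(z + q))^{1/4}` with the principal branch of the complex power. -/
noncomputable def betaFn (q : ℝ) (z : ℂ) : ℂ := ((z - (q : ℂ)) / (z + (q : ℂ))) ^ ((1 : ℂ) / 4)

/-- The reflection coefficient
`r(z) = −i(β_{q_l}² − β_{q_r}²)/(β_{q_l}² + β_{q_r}²)`. -/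
noncomputable def rFn (ql qr : ℝ) (z : ℂ) : ℂ :=
  -Complex.I * ((betaFn ql z) ^ 2 - (betaFn qr z) ^ 2) / ((betaFn ql z) ^ 2 + (betaFn qr z) ^ 2)

lemma betaFn_sq (q : ℝ) (z : ℂ) (hw : (z - (q:ℂ)) / (z + (q:ℂ)) ≠ 0) :
    betaFn q z ^ 2 = ((z - (q:ℂ)) / (z + (q:ℂ))) ^ ((1:ℂ)/2) := by
  unfold betaFn
  rw [sq, ← Complex.cpow_add _ _ hw]
  norm_num

lemma cpow_half_re_im (w : ℂ) (hw : w ≠ 0) :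
    (w ^ ((1:ℂ)/2)).re = Real.exp ((Complex.log w).re / 2) * Real.cos (w.arg / 2) ∧
    (w ^ ((1:ℂ)/2)).im = Real.exp ((Complex.log w).re / 2) * Real.sin (w.arg / 2) := by
  rw [Complex.cpow_def_of_ne_zero hw]
  constructor
  · rw [Complex.exp_re]
    congr 2 <;> simp [Complex.mul_re, Complex.mul_im, Complex.log_im] <;> ring
  · rw [Complex.exp_im]
    congr 2 <;> simp [Complex.mul_re, Complex.mul_im, Complex.log_im] <;> ring

lemma arg_facts (q qr : ℝ) (hq0 : 0 ≤ q) (hqr : q ≤ qr) (z : ℂ)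
    (hz : ¬(z.im = 0 ∧ |z.re| ≤ qr)) :
    ((z - (q:ℂ)) / (z + (q:ℂ)) ≠ 0) ∧
    ((z - (q:ℂ)) / (z + (q:ℂ))).arg < Real.pi ∧
    (0 ≤ z.im → 0 ≤ ((z - (q:ℂ)) / (z + (q:ℂ))).arg) ∧
    (z.im ≤ 0 → ((z - (q:ℂ)) / (z + (q:ℂ))).arg ≤ 0) := by
  have hden : z + (q:ℂ) ≠ 0 := by
    intro h
    apply hz
    have h1 : z = -(q:ℂ) := by linear_combination h
    rw [h1]
    simp only [Complex.neg_re, Complex.ofReal_re, Complex.neg_im, Complex.ofReal_im, neg_zero, abs_neg, _root_.abs_of_nonneg hq0]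
    exact ⟨trivial, hqr⟩
  have hnum : z - (q:ℂ) ≠ 0 := by
    intro h
    apply hz
    have h1 : z = (q:ℂ) := by linear_combination h
    rw [h1]
    simp only [Complex.ofReal_re, Complex.ofReal_im, _root_.abs_of_nonneg hq0]
    exact ⟨trivial, hqr⟩
  have hN : 0 < Complex.normSq (z + (q:ℂ)) := Complex.normSq_pos.mpr hden
  have hw : (z - (q:ℂ)) / (z + (q:ℂ)) ≠ 0 := div_ne_zero hnum hden
  have him : ((z - (q:ℂ)) / (z + (q:ℂ))).im = 2 * q * z.im / Complex.normSq (z + (q:ℂ)) := by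
    rw [Complex.div_im]
    simp
    ring
  by_cases him0 : z.im = 0
  · -- real case : |z.re| > qr
    have hre : qr < |z.re| := by
      by_contra h
      exact hz ⟨him0, le_of_not_gt h⟩
    have hre2 : q^2 < z.re^2 := by
      have : q < |z.re| := lt_of_le_of_lt hqr hre
      nlinarith [abs_nonneg z.re, _root_.sq_abs z.re]
    have hwre : 0 < ((z - (q:ℂ)) / (z + (q:ℂ))).re := by
      rw [Complex.div_re]
      have : (z - (q:ℂ)).re * (z + (q:ℂ)).re + (z - (q:ℂ)).im * (z + (q:ℂ)).im
          = z.re^2 - q^2 := by simp [him0]; ring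
      rw [← add_div]
      calc (0:ℝ) < (z.re^2 - q^2) / Complex.normSq (z + (q:ℂ)) := div_pos (by linarith) hN
        _ = _ := by rw [← this]
    have hwim : ((z - (q:ℂ)) / (z + (q:ℂ))).im = 0 := by rw [him, him0]; ring_nf
    have harg : ((z - (q:ℂ)) / (z + (q:ℂ))).arg = 0 :=
      Complex.arg_eq_zero_iff.mpr ⟨hwre.le, hwim⟩
    exact ⟨hw, by rw [harg]; exact Real.pi_pos, fun _ => harg.ge, fun _ => harg.le⟩
  · by_cases hq : q = 0
    · have hz0 : z ≠ 0 := fun h => him0 (by simp [h])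
      have : (z - (q:ℂ)) / (z + (q:ℂ)) = 1 := by
        rw [hq]; push_cast; simp [div_self hz0]
      rw [this]
      simp [Real.pi_pos]
    · have hq' : 0 < q := lt_of_le_of_ne hq0 (Ne.symm hq)
      refine ⟨hw, ?_, ?_, ?_⟩
      · refine Complex.arg_lt_pi_iff.mpr (Or.inr ?_)
        rw [him]
        apply div_ne_zero _ (ne_of_gt hN)
        intro hcon
        rcases mul_eq_zero.mp hcon with h | h
        · rcases mul_eq_zero.mp h with h | h
          · norm_num at h
          · exact hq h
        · exact him0 h
      · intro h
        rw [Complex.arg_nonneg_iff, him]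
        positivity
      · intro h
        rcases lt_or_eq_of_le h with h | h
        · apply le_of_lt
          rw [Complex.arg_neg_iff, him]
          have : 2 * q * z.im < 0 := by nlinarith
          exact div_neg_of_neg_of_pos this hN
        · exact (him0 h).elim

lemma abs_sub_lt_abs_add (a b : ℂ) (h : 0 < a.re * b.re + a.im * b.im) :
    ‖a - b‖ < ‖a + b‖ := by
  rw [Complex.norm_def, Complex.norm_def]
  apply Real.sqrt_lt_sqrt (Complex.normSq_nonneg _)
  simp only [Complex.normSq_apply, Complex.sub_re, Complex.sub_im, Complex.add_re,
    Complex.add_im]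
  nlinarith

/-- Off the interval `[−q_r, q_r]` the reflection coefficient satisfies `|r(z)| < 1`. -/
theorem reflection_coefficient_lt_one (ql qr : ℝ) (hql : 0 ≤ ql) (hlr : ql ≤ qr)
    (z : ℂ) (hz : ¬(z.im = 0 ∧ |z.re| ≤ qr)) :
    ‖rFn ql qr z‖ < 1 := by
  obtain ⟨hu0, huπ, huP, huN⟩ := arg_facts ql qr hql hlr z hz
  obtain ⟨hv0, hvπ, hvP, hvN⟩ := arg_facts qr qr (hql.trans hlr) le_rfl z hz
  set u : ℂ := (z - (ql:ℂ)) / (z + (ql:ℂ)) with hu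
  set v : ℂ := (z - (qr:ℂ)) / (z + (qr:ℂ)) with hv
  set a : ℂ := betaFn ql z ^ 2 with ha
  set b : ℂ := betaFn qr z ^ 2 with hb
  have hau : a = u ^ ((1:ℂ)/2) := betaFn_sq ql z hu0
  have hbv : b = v ^ ((1:ℂ)/2) := betaFn_sq qr z hv0
  obtain ⟨hare, haim⟩ := cpow_half_re_im u hu0
  obtain ⟨hbre, hbim⟩ := cpow_half_re_im v hv0
  -- the angle difference is in (-π, π)
  have hπu := Complex.neg_pi_lt_arg u
  have hπv := Complex.neg_pi_lt_arg v
  have hdiff : |u.arg / 2 - v.arg / 2| < Real.pi / 2 := by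
    rcases le_total 0 z.im with h | h
    · have := huP h; have := hvP h
      rw [abs_lt]; constructor <;> linarith
    · have := huN h; have := hvN h
      rw [abs_lt]; constructor <;> linarith
  have hcos : 0 < Real.cos (u.arg / 2 - v.arg / 2) := by
    apply Real.cos_pos_of_mem_Ioo
    rw [abs_lt] at hdiff
    exact ⟨by linarith [hdiff.1], hdiff.2⟩
  have hpos : 0 < a.re * b.re + a.im * b.im := by
    rw [hau, hbv, hare, haim, hbre, hbim]
    have : Real.exp ((Complex.log u).re / 2) * Real.cos (u.arg / 2) *
        (Real.exp ((Complex.log v).re / 2) * Real.cos (v.arg / 2)) +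
        Real.exp ((Complex.log u).re / 2) * Real.sin (u.arg / 2) *
        (Real.exp ((Complex.log v).re / 2) * Real.sin (v.arg / 2)) =
        Real.exp ((Complex.log u).re / 2) * Real.exp ((Complex.log v).re / 2) *
        Real.cos (u.arg / 2 - v.arg / 2) := by
      rw [Real.cos_sub]; ring
    rw [this]
    positivity
  have hlt : ‖a - b‖ < ‖a + b‖ := abs_sub_lt_abs_add a b hpos
  have habs : 0 < ‖a + b‖ := lt_of_le_of_lt (norm_nonneg _) hlt
  rw [rFn]
  rw [norm_div, norm_mul]
  simp only [norm_neg, Complex.norm_I, one_mul]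
  rw [div_lt_one habs]
  exact hlt
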